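/- arXiv:1902.04144 — 13 statements merged into one kernel-verified Lean document; each statement's English description precedes it below -/
import Mathlib

section
/- Let a^1, …, a^k ∈ [0,1]^n be fundamental memories and let C be a fuzzy conjunction. Then the max-C PAFMM V is idempotent: V(V(x)) = V(x) for every x ∈ [0,1]^n. -/
open scoped Classical
noncomputable section

/-- The unit interval `[0,1] ⊆ ℝ`. -/
abbrev UI := unitInterval

instance : Fact ((0:ℝ) ≤ 1) := ⟨zero_le_one⟩

/-- A fuzzy conjunction: increasing in each argument, `C 0 0 = C 0 1 = C 1 0 = 0`, `C 1 1 = 1`. -/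
def IsFuzzyConj (C : UI → UI → UI) : Prop :=
  (∀ a, Monotone (C a)) ∧ (∀ b, Monotone fun a => C a b) ∧
    C 0 0 = 0 ∧ C 0 1 = 0 ∧ C 1 0 = 0 ∧ C 1 1 = 1

/-- A fuzzy disjunction: increasing in each argument, `D 0 0 = 0`, `D 0 1 = D 1 0 = D 1 1 = 1`. -/
def IsFuzzyDisj (D : UI → UI → UI) : Prop :=
  (∀ a, Monotone (D a)) ∧ (∀ b, Monotone fun a => D a b) ∧
    D 0 0 = 0 ∧ D 0 1 = 1 ∧ D 1 0 = 1 ∧ D 1 1 = 1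

/-- A fuzzy implication: decreasing in the 1st argument, increasing in the 2nd,
`I 0 0 = I 0 1 = I 1 1 = 1`, `I 1 0 = 0`. -/
def IsFuzzyImpl (Impl : UI → UI → UI) : Prop :=
  (∀ y, Antitone fun a => Impl a y) ∧ (∀ a, Monotone (Impl a)) ∧
    Impl 0 0 = 1 ∧ Impl 0 1 = 1 ∧ Impl 1 1 = 1 ∧ Impl 1 0 = 0

/-- A fuzzy co-implication: decreasing in the 1st argument, increasing in the 2nd,
`J 0 0 = J 1 0 = J 1 1 = 0`, `J 0 1 = 1`. -/
def IsFuzzyCoimpl (J : UI → UI → UI) : Prop :=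
  (∀ y, Antitone fun a => J a y) ∧ (∀ a, Monotone (J a)) ∧
    J 0 0 = 0 ∧ J 1 0 = 0 ∧ J 1 1 = 0 ∧ J 0 1 = 1

/-- `(Impl, C)` forms an adjunction: `y ≤ Impl a x ↔ C y a ≤ x`. -/
def AdjunctionIC (Impl C : UI → UI → UI) : Prop :=
  ∀ a x y : UI, y ≤ Impl a x ↔ C y a ≤ x

/-- `(D, J)` forms an adjunction: `J a x ≤ y ↔ x ≤ D y a`. -/
def AdjunctionDJ (D J : UI → UI → UI) : Prop :=
  ∀ a x y : UI, J a x ≤ y ↔ x ≤ D y a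

/-- The set of max-`C` combinations of the fundamental memories `a^1, …, a^k`. -/
def maxCSet {n k : ℕ} (C : UI → UI → UI) (a : Fin k → Fin n → UI) :
    Set (Fin n → UI) :=
  { z | ∃ lam : Fin k → UI, ∀ i, z i = ⨆ ξ, C (lam ξ) (a ξ i) }

/-- The max-`C` PAFMM: `V(x) = sup { z ∈ 𝒞(𝒜) : z ≤ x }` (componentwise `≤` and `sup`). -/
def pafmmV {n k : ℕ} (C : UI → UI → UI) (a : Fin k → Fin n → UI)
    (x : Fin n → UI) : Fin n → UI :=
  sSup { z | z ∈ maxCSet C a ∧ z ≤ x }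

/-- The set of min-`D` combinations of the fundamental memories `a^1, …, a^k`. -/
def minDSet {n k : ℕ} (D : UI → UI → UI) (a : Fin k → Fin n → UI) :
    Set (Fin n → UI) :=
  { z | ∃ θ : Fin k → UI, ∀ i, z i = ⨅ ξ, D (θ ξ) (a ξ i) }

/-- The min-`D` PAFMM: `S(x) = inf { y ∈ 𝒟(𝒜) : y ≥ x }` (componentwise `≥` and `inf`). -/
def pafmmS {n k : ℕ} (D : UI → UI → UI) (a : Fin k → Fin n → UI)
    (x : Fin n → UI) : Fin n → UI :=
  sInf { y | y ∈ minDSet D a ∧ x ≤ y }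

/-- Gaines' fuzzy conjunction. -/
def CG (x y : UI) : UI := if x = 0 then 0 else y

/-- Gaines' fuzzy implication. -/
def IG (x y : UI) : UI := if x ≤ y then 1 else 0

/-- Gaines' fuzzy disjunction. -/
def DG (x y : UI) : UI := if x = 1 then 1 else y

/-- Gaines' fuzzy co-implication. -/
def JG (x y : UI) : UI := if y ≤ x then 0 else 1

/-- The max-`C` PAFMM is idempotent: `V(V(x)) = V(x)`. -/
theorem maxC_pafmm_idempotent {n k : ℕ} (C : UI → UI → UI) (hC : IsFuzzyConj C)
    (a : Fin k → Fin n → UI) (x : Fin n → UI) :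
    pafmmV C a (pafmmV C a x) = pafmmV C a x := by
  have h1 : pafmmV C a x ≤ x := sSup_le fun z hz => hz.2
  have hset : {z | z ∈ maxCSet C a ∧ z ≤ pafmmV C a x}
      = {z | z ∈ maxCSet C a ∧ z ≤ x} := by
    ext z
    constructor
    · rintro ⟨hz, hle⟩
      exact ⟨hz, hle.trans h1⟩
    · rintro ⟨hz, hle⟩
      exact ⟨hz, le_sSup ⟨hz, hle⟩⟩
  exact congrArg sSup hset
end
end

section
/- Let a^1, …, a^k ∈ [0,1]^n be fundamental memories and let D be a fuzzy disjunction. Then the min-D PAFMM S is idempotent: S(S(x)) = S(x) for every x ∈ [0,1]^n. -/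
open scoped Classical
noncomputable section

/-- The min-`D` PAFMM is idempotent: `S(S(x)) = S(x)`. -/
theorem minD_pafmm_idempotent {n k : ℕ} (D : UI → UI → UI) (hD : IsFuzzyDisj D)
    (a : Fin k → Fin n → UI) (x : Fin n → UI) :
    pafmmS D a (pafmmS D a x) = pafmmS D a x := by
  have hle : ∀ z : Fin n → UI, z ≤ pafmmS D a z := fun z =>
    le_sInf fun y hy => hy.2
  unfold pafmmS
  congr 1
  ext y
  simp only [Set.mem_setOf_eq]
  constructor
  · rintro ⟨h1, h2⟩
    exact ⟨h1, (hle x).trans h2⟩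
  · rintro ⟨h1, h2⟩
    exact ⟨h1, sInf_le ⟨h1, h2⟩⟩
end
end

section
/- Let a^1, …, a^k ∈ [0,1]^n be fundamental memories and let C be a fuzzy conjunction that has a left identity, i.e., there exists e ∈ [0,1] with C(e,x) = x for all x ∈ [0,1]. Then the max-C PAFMM V has optimal absolute storage capacity: V(a^ξ) = a^ξ for every ξ = 1, …, k. -/
open scoped Classical
noncomputable section

/-- If the fuzzy conjunction `C` has a left identity, then the max-`C` PAFMM
has optimal absolute storage capacity: `V(a^ξ) = a^ξ` for every `ξ`. -/
theorem maxC_pafmm_storage {n k : ℕ} (C : UI → UI → UI) (hC : IsFuzzyConj C)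
    (hid : ∃ e : UI, ∀ t : UI, C e t = t)
    (a : Fin k → Fin n → UI) (ξ : Fin k) :
    pafmmV C a (a ξ) = a ξ := by
  obtain ⟨e, he⟩ := hid
  obtain ⟨hmono, hmono2, h00, h01, h10, h11⟩ := hC
  apply le_antisymm
  · exact sSup_le fun z hz => hz.2
  · apply le_sSup
    refine ⟨⟨fun η => if η = ξ then e else 0, fun i => ?_⟩, le_refl _⟩
    apply le_antisymm
    · calc a ξ i = C (if ξ = ξ then e else 0) (a ξ i) := by simp [he]
        _ ≤ _ := le_iSup (fun η => C (if η = ξ then e else 0) (a η i)) ξ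
    · apply iSup_le
      intro η
      by_cases h : η = ξ
      · simp [h, he]
      · simp only [h, if_false]
        have : C 0 (a η i) ≤ C 0 1 := hmono 0 (a η i).2.2
        rw [h01] at this
        exact le_trans this (a ξ i).2.1
end
end

section
/- Let a^1, …, a^k ∈ [0,1]^n be fundamental memories and let D be a fuzzy disjunction that has a left identity, i.e., there exists e ∈ [0,1] with D(e,x) = x for all x ∈ [0,1]. Then the min-D PAFMM S has optimal absolute storage capacity: S(a^ξ) = a^ξ for every ξ = 1, …, k. -/
open scoped Classical
noncomputable section

/-- If the fuzzy disjunction `D` has a left identity, then the min-`D` PAFMM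
has optimal absolute storage capacity: `S(a^ξ) = a^ξ` for every `ξ`. -/
theorem minD_pafmm_storage {n k : ℕ} (D : UI → UI → UI) (hD : IsFuzzyDisj D)
    (hid : ∃ e : UI, ∀ t : UI, D e t = t)
    (a : Fin k → Fin n → UI) (ξ : Fin k) :
    pafmmS D a (a ξ) = a ξ := by
  obtain ⟨e, he⟩ := hid
  have hD1 : ∀ t : UI, D 1 t = 1 := by
    intro t
    refine le_antisymm (unitInterval.le_one _) ?_
    calc (1:UI) = D 1 0 := hD.2.2.2.2.1.symm
      _ ≤ D 1 t := hD.1 1 (unitInterval.nonneg' )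
  have hmem : a ξ ∈ {y | y ∈ minDSet D a ∧ a ξ ≤ y} := by
    refine ⟨⟨fun η => if η = ξ then e else 1, fun i => ?_⟩, le_refl _⟩
    refine le_antisymm (le_iInf fun η => ?_) ?_
    · by_cases h : η = ξ
      · subst h; simp [he]
      · simp only [if_neg h, hD1]; exact unitInterval.le_one _
    · exact iInf_le_of_le ξ (by simp [he])
  refine le_antisymm (sInf_le hmem) (le_sInf fun y hy => hy.2)
end
end

section
/- Let a^1, …, a^k ∈ [0,1]^n be fundamental memories, and let a fuzzy implication I and a fuzzy conjunction C form an adjunction. Then for every input x ∈ [0,1]^n, the max-C PAFMM V satisfies, for each component i: V(x)_i = max_{ξ=1..k} C(λ_ξ, a^ξ_i), where λ_ξ = min_{j=1..n} I(a^ξ_j, x_j). -/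
open scoped Classical
noncomputable section

/-- If the fuzzy implication `Impl` and the fuzzy conjunction `C` form an
adjunction, then `V(x)_i = max_ξ C(λ_ξ, a^ξ_i)` with `λ_ξ = min_j Impl(a^ξ_j, x_j)`. -/
theorem maxC_pafmm_formula {n k : ℕ} (Impl C : UI → UI → UI)
    (hI : IsFuzzyImpl Impl) (hC : IsFuzzyConj C) (hIC : AdjunctionIC Impl C)
    (a : Fin k → Fin n → UI) (x : Fin n → UI) (i : Fin n) :
    pafmmV C a x i = ⨆ ξ, C (⨅ j, Impl (a ξ j) (x j)) (a ξ i) := by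
  set lam : Fin k → UI := fun ξ => ⨅ j, Impl (a ξ j) (x j) with hlam
  set zstar : Fin n → UI := fun i => ⨆ ξ, C (lam ξ) (a ξ i) with hz
  have hset : pafmmV C a x = zstar := by
    unfold pafmmV
    apply le_antisymm
    · apply sSup_le
      rintro z ⟨⟨l, hl⟩, hzx⟩
      intro j
      rw [hl]
      apply iSup_mono
      intro ξ
      have hle : l ξ ≤ lam ξ := by
        apply le_iInf
        intro j'
        rw [hIC (a ξ j') (x j') (l ξ)]
        calc C (l ξ) (a ξ j') ≤ z j' := by rw [hl j']; exact le_iSup (fun ξ => C (l ξ) (a ξ j')) ξ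
          _ ≤ x j' := hzx j'
      exact hC.2.1 (a ξ j) hle
    · apply le_sSup
      constructor
      · exact ⟨lam, fun i => rfl⟩
      · intro j
        apply iSup_le
        intro ξ
        rw [← hIC (a ξ j) (x j) (lam ξ)]
        exact iInf_le _ j
  rw [hset]
end
end

section
/- Let a^1, …, a^k ∈ [0,1]^n be fundamental memories, and let a fuzzy disjunction D and a fuzzy co-implication J form an adjunction. Then for every input x ∈ [0,1]^n, the min-D PAFMM S satisfies, for each component i: S(x)_i = min_{ξ=1..k} D(θ_ξ, a^ξ_i), where θ_ξ = max_{j=1..n} J(a^ξ_j, x_j). -/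
open scoped Classical
noncomputable section

/-- If the fuzzy disjunction `D` and the fuzzy co-implication `J` form an
adjunction, then `S(x)_i = min_ξ D(θ_ξ, a^ξ_i)` with `θ_ξ = max_j J(a^ξ_j, x_j)`. -/
theorem minD_pafmm_formula {n k : ℕ} (D J : UI → UI → UI)
    (hD : IsFuzzyDisj D) (hJ : IsFuzzyCoimpl J) (hDJ : AdjunctionDJ D J)
    (a : Fin k → Fin n → UI) (x : Fin n → UI) (i : Fin n) :
    pafmmS D a x i = ⨅ ξ, D (⨆ j, J (a ξ j) (x j)) (a ξ i) := by
  classical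
  set θ : Fin k → UI := fun ξ => ⨆ j, J (a ξ j) (x j) with hθ
  have hz_mem : (fun i => ⨅ ξ, D (θ ξ) (a ξ i)) ∈ {y | y ∈ minDSet D a ∧ x ≤ y} := by
    refine ⟨⟨θ, fun i => rfl⟩, fun j => ?_⟩
    exact le_iInf fun ξ => (hDJ _ _ _).mp (le_iSup (fun j => J (a ξ j) (x j)) j)
  have hlb : ∀ y ∈ {y | y ∈ minDSet D a ∧ x ≤ y}, (fun i => ⨅ ξ, D (θ ξ) (a ξ i)) ≤ y := by
    rintro y ⟨⟨θ', hθ'⟩, hxy⟩ i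
    rw [hθ' i]
    refine iInf_mono fun ξ => ?_
    have hθle : θ ξ ≤ θ' ξ :=
      iSup_le fun j => (hDJ _ _ _).mpr ((hxy j).trans ((hθ' j).le.trans (iInf_le _ ξ)))
    exact hD.2.1 (a ξ i) hθle
  have h : pafmmS D a x = fun i => ⨅ ξ, D (θ ξ) (a ξ i) := by
    unfold pafmmS
    exact le_antisymm (sInf_le hz_mem) (le_sInf hlb)
  exact congrFun h i
end
end

section
/- Let a fuzzy implication I and a fuzzy conjunction C form an adjunction, let a fuzzy disjunction D and a fuzzy co-implication J form an adjunction, and suppose C and D are dual with respect to a strong fuzzy negation η, i.e., D(x,y) = η(C(η(x),η(y))) for all x, y ∈ [0,1]. Let a^1, …, a^k ∈ [0,1]^n be fundamental memories, define b^ξ ∈ [0,1]^n by b^ξ_i = η(a^ξ_i), let S be the min-D PAFMM for a^1, …, a^k, and define the negation of S by S*(x) = η(S(η(x))), where η is applied componentwise. Then for every x ∈ [0,1]^n and each component i: S*(x)_i = max_{ξ=1..k} C(λ*_ξ, b^ξ_i), where λ*_ξ = min_{j=1..n} I(b^ξ_j, x_j); that is, S* is the max-C PAFMM designed for the storage of b^1,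 …, b^k as given by its adjunction formula. -/
open scoped Classical
noncomputable section

section Aux
variable {η : UI → UI}

lemma eta_reflect (hηa : Antitone η) (hηη : ∀ t, η (η t) = t) {s t : UI} :
    s ≤ η t ↔ t ≤ η s := by
  constructor
  · intro h; have := hηa h; rwa [hηη] at this
  · intro h; have := hηa h; rwa [hηη] at this

lemma eta_iInf (hηa : Antitone η) (hηη : ∀ t, η (η t) = t) {ι : Type*} (f : ι → UI) :
    η (⨅ i, f i) = ⨆ i, η (f i) := by
  apply le_antisymm
  · rw [← hηη (⨆ i, η (f i))]
    apply hηa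
    apply le_iInf
    intro j
    rw [← hηη (f j)]
    exact hηa (le_iSup (fun i => η (f i)) j)
  · exact iSup_le fun j => hηa (iInf_le f j)

lemma eta_iSup (hηa : Antitone η) (hηη : ∀ t, η (η t) = t) {ι : Type*} (f : ι → UI) :
    η (⨆ i, f i) = ⨅ i, η (f i) := by
  apply le_antisymm
  · exact le_iInf fun j => hηa (le_iSup f j)
  · rw [← hηη (⨅ i, η (f i))]
    apply hηa
    apply iSup_le
    intro j
    rw [← hηη (f j)]
    exact hηa (iInf_le (fun i => η (f i)) j)

lemma J_eq (Impl C D J : UI → UI → UI) (hIC : AdjunctionIC Impl C) (hDJ : AdjunctionDJ D J)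
    (hηa : Antitone η) (hηη : ∀ t, η (η t) = t)
    (hdual : ∀ x y : UI, D x y = η (C (η x) (η y))) (u v : UI) :
    J u v = η (Impl (η u) (η v)) := by
  apply le_antisymm
  · rw [hDJ, hdual, hηη, eta_reflect hηa hηη]
    exact (hIC (η u) (η v) (Impl (η u) (η v))).mp le_rfl
  · rw [← hηη (J u v), eta_reflect hηa hηη, hηη]
    rw [hIC]
    rw [← eta_reflect hηa hηη, ← hηη (C (η (J u v)) (η u)), ← hdual, hηη]
    exact (hDJ u v (J u v)).mp le_rfl

end Aux

/-- Let `(Impl, C)` and `(D, J)` be adjunctions with `C, D` dual w.r.t. a strong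
fuzzy negation `η`. For `b^ξ_i = η(a^ξ_i)`, the negation `S*(x) = η(S(η(x)))` of the min-`D`
PAFMM `S` for `a^1,…,a^k` is the max-`C` PAFMM for `b^1,…,b^k` given by its adjunction
formula: `S*(x)_i = max_ξ C(λ*_ξ, b^ξ_i)` where `λ*_ξ = min_j Impl(b^ξ_j, x_j)`. -/
theorem negation_of_minD_pafmm {n k : ℕ} (Impl C D J : UI → UI → UI) (η : UI → UI)
    (hI : IsFuzzyImpl Impl) (hC : IsFuzzyConj C) (hD : IsFuzzyDisj D)
    (hJ : IsFuzzyCoimpl J) (hIC : AdjunctionIC Impl C) (hDJ : AdjunctionDJ D J)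
    (hηa : Antitone η) (hη0 : η 0 = 1) (hη1 : η 1 = 0) (hηη : ∀ t, η (η t) = t)
    (hdual : ∀ x y : UI, D x y = η (C (η x) (η y)))
    (a b : Fin k → Fin n → UI) (hb : ∀ ξ i, b ξ i = η (a ξ i))
    (x : Fin n → UI) (i : Fin n) :
    η (pafmmS D a (fun j => η (x j)) i) =
      ⨆ ξ, C (⨅ j, Impl (b ξ j) (x j)) (b ξ i) := by
  classical
  set y : Fin n → UI := fun j => η (x j) with hy
  set θ : Fin k → UI := fun ξ => ⨆ j, J (a ξ j) (y j) with hθ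
  set z : Fin n → UI := fun i => ⨅ ξ, D (θ ξ) (a ξ i) with hz
  have hleast : IsLeast { w | w ∈ minDSet D a ∧ y ≤ w } z := by
    constructor
    · refine ⟨⟨θ, fun i => rfl⟩, fun i => le_iInf fun ξ => ?_⟩
      exact (hDJ (a ξ i) (y i) (θ ξ)).mp (le_iSup (fun j => J (a ξ j) (y j)) i)
    · rintro w ⟨⟨θ', hθ'⟩, hyw⟩ i
      rw [hθ']
      refine iInf_mono fun ξ => hD.2.1 (a ξ i) ?_
      refine iSup_le fun j => (hDJ (a ξ j) (y j) (θ' ξ)).mpr ?_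
      exact (hyw j).trans ((hθ' j).le.trans (iInf_le _ ξ))
  have hS : pafmmS D a y = z := le_antisymm (sInf_le hleast.1) (le_sInf hleast.2)
  have hSi : pafmmS D a y i = z i := by rw [hS]
  rw [hSi, hz]
  rw [eta_iInf hηa hηη]
  refine iSup_congr fun ξ => ?_
  have hd : η (D (θ ξ) (a ξ i)) = C (η (θ ξ)) (b ξ i) := by
    rw [hdual, hηη, hb]
  rw [hd]
  congr 1
  rw [hθ]
  rw [eta_iSup hηa hηη]
  refine iInf_congr fun j => ?_
  rw [J_eq Impl C D J hIC hDJ hηa hηη hdual, hηη, hb, hy, hηη]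
end
end

section
/- Let a fuzzy implication I and a fuzzy conjunction C form an adjunction, let a fuzzy disjunction D and a fuzzy co-implication J form an adjunction, and suppose C and D are dual with respect to a strong fuzzy negation η, i.e., D(x,y) = η(C(η(x),η(y))) for all x, y ∈ [0,1]. Let a^1, …, a^k ∈ [0,1]^n be fundamental memories, define b^ξ ∈ [0,1]^n by b^ξ_i = η(a^ξ_i), let V be the max-C PAFMM for a^1, …, a^k, and define the negation of V by V*(x) = η(V(η(x))), where η is applied componentwise. Then for every x ∈ [0,1]^n and each component i: V*(x)_i = min_{ξ=1..k} D(θ*_ξ, b^ξ_i), where θ*_ξ = max_{j=1..n} J(b^ξ_j, x_j); that is, V* is the min-D PAFMM designed for the storage of b^1, …, b^k as given by its adjunction formula. -/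
open scoped Classical
noncomputable section

/-- Let `(Impl, C)` and `(D, J)` be adjunctions with `C, D` dual w.r.t. a strong
fuzzy negation `η`. For `b^ξ_i = η(a^ξ_i)`, the negation `V*(x) = η(V(η(x)))` of the max-`C`
PAFMM `V` for `a^1,…,a^k` is the min-`D` PAFMM for `b^1,…,b^k` given by its adjunction
formula: `V*(x)_i = min_ξ D(θ*_ξ, b^ξ_i)` where `θ*_ξ = max_j J(b^ξ_j, x_j)`. -/
theorem negation_of_maxC_pafmm {n k : ℕ} (Impl C D J : UI → UI → UI) (η : UI → UI)
    (hI : IsFuzzyImpl Impl) (hC : IsFuzzyConj C) (hD : IsFuzzyDisj D)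
    (hJ : IsFuzzyCoimpl J) (hIC : AdjunctionIC Impl C) (hDJ : AdjunctionDJ D J)
    (hηa : Antitone η) (hη0 : η 0 = 1) (hη1 : η 1 = 0) (hηη : ∀ t, η (η t) = t)
    (hdual : ∀ x y : UI, D x y = η (C (η x) (η y)))
    (a b : Fin k → Fin n → UI) (hb : ∀ ξ i, b ξ i = η (a ξ i))
    (x : Fin n → UI) (i : Fin n) :
    η (pafmmV C a (fun j => η (x j)) i) =
      ⨅ ξ, D (⨆ j, J (b ξ j) (x j)) (b ξ i) := by

  obtain ⟨hCm1, hCm2, _, _, _, _⟩ := hC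
  -- basic facts about η
  have hle : ∀ u v : UI, u ≤ η v ↔ v ≤ η u := by
    intro u v
    constructor <;> intro h
    · have := hηa h; rwa [hηη] at this
    · have := hηa h; rwa [hηη] at this
  have hle' : ∀ u v : UI, η u ≤ v ↔ η v ≤ u := by
    intro u v
    constructor <;> intro h
    · rw [← hηη v] at h
      exact (hle (η u) (η v)).mp h |>.trans_eq (hηη u) |>.trans_eq rfl
    · rw [← hηη u] at h
      exact (hle (η v) (η u)).mp h |>.trans_eq (hηη v)
  have hηiSup : ∀ {m : ℕ} (s : Fin m → UI), η (⨆ j, s j) = ⨅ j, η (s j) := by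
    intro m s
    apply le_antisymm
    · exact le_iInf fun j => hηa (le_iSup s j)
    · rw [hle]
      exact iSup_le fun j => (hle _ _).mp (iInf_le _ j)
  have hηiInf : ∀ {m : ℕ} (s : Fin m → UI), η (⨅ j, s j) = ⨆ j, η (s j) := by
    intro m s
    have := hηiSup (fun j => η (s j))
    simp only [hηη] at this
    rw [← this, hηη]
  -- J is dual to Impl
  have hJdual : ∀ u v : UI, J u v = η (Impl (η u) (η v)) := by
    intro u v
    have key : ∀ y : UI, J u v ≤ y ↔ η (Impl (η u) (η v)) ≤ y := by
      intro y
      rw [hDJ u v y, hdual, hle, hle' _ y]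
      constructor
      · intro h
        exact (hIC (η u) (η v) (η y)).mpr h
      · intro h
        exact (hIC (η u) (η v) (η y)).mp h
    exact le_antisymm ((key _).mpr le_rfl) ((key _).mp le_rfl)
  -- the optimal parameters and the optimal combination
  set y : Fin n → UI := fun j => η (x j) with hy
  set lam : Fin k → UI := fun ξ => ⨅ j, Impl (a ξ j) (y j) with hlam
  set zstar : Fin n → UI := fun i => ⨆ ξ, C (lam ξ) (a ξ i) with hz
  have hmem : zstar ∈ {z | z ∈ maxCSet C a ∧ z ≤ y} := by
    refine ⟨⟨lam, fun i => rfl⟩, fun i => ?_⟩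
    exact iSup_le fun ξ => (hIC (a ξ i) (y i) (lam ξ)).mp (iInf_le _ i)
  have hub : ∀ z ∈ {z | z ∈ maxCSet C a ∧ z ≤ y}, z ≤ zstar := by
    rintro z ⟨⟨lam', hlam'⟩, hzy⟩ i
    rw [hlam' i]
    refine iSup_le fun ξ => le_iSup_of_le ξ (hCm2 (a ξ i) ?_)
    refine le_iInf fun j => (hIC (a ξ j) (y j) (lam' ξ)).mpr ?_
    calc C (lam' ξ) (a ξ j) ≤ z j := by
          rw [hlam' j]; exact le_iSup (fun ξ => C (lam' ξ) (a ξ j)) ξ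
      _ ≤ y j := hzy j
  have hV : pafmmV C a y = zstar :=
    le_antisymm (sSup_le hub) (le_sSup hmem)
  have hVi : pafmmV C a y i = zstar i := by rw [hV]
  -- θ and λ match under η
  have htheta : ∀ ξ, η (⨆ j, J (b ξ j) (x j)) = lam ξ := by
    intro ξ
    rw [hηiSup]
    refine iInf_congr fun j => ?_
    rw [hJdual, hηη, hb, hηη]
  calc η (pafmmV C a y i) = η (zstar i) := by rw [hVi]
    _ = ⨅ ξ, η (C (lam ξ) (a ξ i)) := hηiSup _
    _ = ⨅ ξ, D (⨆ j, J (b ξ j) (x j)) (b ξ i) := by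
        refine iInf_congr fun ξ => ?_
        rw [hdual, htheta, hb, hηη]
end
end

section
/- Let a^1, …, a^k ∈ [0,1]^n be fundamental memories, and let x ∈ [0,1]^n. If there exists a unique index γ ∈ {1,…,k} such that a^γ ≤ x (componentwise), then Zadeh's max-C PAFMM satisfies V_Z(x) = a^γ. -/
open scoped Classical
noncomputable section

/-- Zadeh's max-`C` PAFMM: `V_Z(x)_i = max_ξ C_G(λ_ξ, a^ξ_i)`, `λ_ξ = min_j I_G(a^ξ_j, x_j)`. -/
def zadehV {n k : ℕ} (a : Fin k → Fin n → UI) (x : Fin n → UI) : Fin n → UI :=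
  fun i => ⨆ ξ, CG (⨅ j, IG (a ξ j) (x j)) (a ξ i)

/-- If there is a unique index `γ` with `a^γ ≤ x` (componentwise), then
Zadeh's max-`C` PAFMM retrieves `a^γ`: `V_Z(x) = a^γ`. -/
theorem zadehV_unique_recall {n k : ℕ} (a : Fin k → Fin n → UI) (x : Fin n → UI)
    (γ : Fin k) (hγ : a γ ≤ x) (huniq : ∀ ξ : Fin k, a ξ ≤ x → ξ = γ) :
    zadehV a x = a γ := by
  funext i
  have hlam : ∀ ξ : Fin k, CG (⨅ j, IG (a ξ j) (x j)) (a ξ i)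
      = if ξ = γ then a γ i else 0 := by
    intro ξ
    by_cases h : a ξ ≤ x
    · have hξγ := huniq ξ h
      subst hξγ
      have h1 : (⨅ j, IG (a ξ j) (x j)) = 1 := by
        apply le_antisymm unitInterval.le_one'
        apply le_iInf
        intro j
        simp [IG, h j]
      have : (1:UI) ≠ 0 := by
        intro hh
        exact one_ne_zero (congrArg Subtype.val hh)
      simp [h1, CG, this]
    · rw [Pi.le_def] at h; push_neg at h
      obtain ⟨j, hj⟩ := h
      have h0 : (⨅ j, IG (a ξ j) (x j)) = 0 := by
        apply le_antisymm _ unitInterval.nonneg'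
        have : IG (a ξ j) (x j) = 0 := by simp [IG, not_le.mpr hj]
        calc (⨅ j, IG (a ξ j) (x j)) ≤ IG (a ξ j) (x j) := iInf_le _ j
          _ = 0 := this
      have hne : ξ ≠ γ := by
        intro hh; subst hh; exact absurd (hγ j) (not_le.mpr hj)
      simp [h0, CG, hne]
  show (⨆ ξ, CG (⨅ j, IG (a ξ j) (x j)) (a ξ i)) = a γ i
  simp only [hlam]
  apply le_antisymm
  · apply iSup_le
    intro ξ
    by_cases h : ξ = γ <;> simp [h, unitInterval.nonneg']
  · have := le_iSup (fun ξ => if ξ = γ then a γ i else 0) γ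
    simpa using this
end
end

section
/- Let a^1, …, a^k ∈ [0,1]^n be fundamental memories, and let x ∈ [0,1]^n. If there exists a unique index μ ∈ {1,…,k} such that a^μ ≥ x (componentwise), then Zadeh's min-D PAFMM satisfies S_Z(x) = a^μ. -/
open scoped Classical
noncomputable section

/-- Zadeh's min-`D` PAFMM: `S_Z(x)_i = min_ξ D_G(θ_ξ, a^ξ_i)`, `θ_ξ = max_j J_G(a^ξ_j, x_j)`. -/
def zadehS {n k : ℕ} (a : Fin k → Fin n → UI) (x : Fin n → UI) : Fin n → UI :=
  fun i => ⨅ ξ, DG (⨆ j, JG (a ξ j) (x j)) (a ξ i)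

/-- If there is a unique index `μ` with `a^μ ≥ x` (componentwise), then
Zadeh's min-`D` PAFMM retrieves `a^μ`: `S_Z(x) = a^μ`. -/
theorem zadehS_unique_recall {n k : ℕ} (a : Fin k → Fin n → UI) (x : Fin n → UI)
    (μ : Fin k) (hμ : x ≤ a μ) (huniq : ∀ ξ : Fin k, x ≤ a ξ → ξ = μ) :
    zadehS a x = a μ := by
  funext i
  unfold zadehS
  have h01 : (0 : UI) ≠ 1 := by
    intro h
    have := congrArg Subtype.val h
    norm_num at this
  have hμθ : (⨆ j, JG (a μ j) (x j)) = (0 : UI) := by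
    apply le_antisymm
    · exact iSup_le fun j => by simp [JG, hμ j]
    · exact unitInterval.nonneg'
  apply le_antisymm
  · have := iInf_le (fun ξ => DG (⨆ j, JG (a ξ j) (x j)) (a ξ i)) μ
    simpa [hμθ, DG, Ne.symm h01] using this
  · apply le_iInf
    intro ξ
    by_cases hξ : ξ = μ
    · subst hξ
      simp [hμθ, DG, Ne.symm h01]
    · have hnle : ¬ x ≤ a ξ := fun h => hξ (huniq ξ h)
      obtain ⟨j, hj⟩ := not_forall.mp hnle
      have hθ : (⨆ j', JG (a ξ j') (x j')) = (1 : UI) := by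
        apply le_antisymm unitInterval.le_one'
        calc (1:UI) = JG (a ξ j) (x j) := by simp [JG, hj]
          _ ≤ _ := le_iSup (fun j' => JG (a ξ j') (x j')) j
      simp [DG, hθ, unitInterval.le_one']
end
end

section
/- Let a fuzzy implication I and a fuzzy conjunction C form an adjunction, where C is associative and has a left identity. Given fundamental memories a^1, …, a^k ∈ [0,1]^n, define the synaptic weight matrix W ∈ [0,1]^{n×n} by w_{ij} = min_{ξ=1..k} I(a^ξ_j, a^ξ_i), and the max-C AFMM 𝒲 : [0,1]^n → [0,1]^n componentwise by 𝒲(x)_i = max_{j=1..n} C(w_{ij}, x_j). Then every fundamental memory is a fixed point of 𝒲 (𝒲(a^ξ) = a^ξ for all ξ), and for every x ∈ [0,1]^n, 𝒲(x) = inf{ y ∈ [0,1]^n : 𝒲(y) = y and y ≥ x }, where ≥ and inf are componentwise. -/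
open scoped Classical
noncomputable section

/-- Let `(Impl, C)` be an adjunction where the fuzzy conjunction `C` is
associative and has a left identity. With `w_{ij} = min_ξ Impl(a^ξ_j, a^ξ_i)` and
`𝒲(x)_i = max_j C(w_{ij}, x_j)`, every fundamental memory is a fixed point of `𝒲`, and
`𝒲(x) = inf{ y : 𝒲(y) = y ∧ y ≥ x }` (componentwise). -/
theorem maxC_afmm_projection {n k : ℕ} (Impl C : UI → UI → UI)
    (hI : IsFuzzyImpl Impl) (hC : IsFuzzyConj C) (hIC : AdjunctionIC Impl C)
    (hassoc : ∀ x y z : UI, C (C x y) z = C x (C y z))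
    (hid : ∃ e : UI, ∀ t : UI, C e t = t)
    (a : Fin k → Fin n → UI)
    (w : Fin n → Fin n → UI) (hw : ∀ i j, w i j = ⨅ ξ, Impl (a ξ j) (a ξ i))
    (W : (Fin n → UI) → Fin n → UI)
    (hW : ∀ x i, W x i = ⨆ j, C (w i j) (x j)) :
    (∀ ξ, W (a ξ) = a ξ) ∧
      ∀ x, W x = sInf { y : Fin n → UI | W y = y ∧ x ≤ y } := by
  obtain ⟨e, he⟩ := hid
  have Cmono2 : ∀ a, Monotone (C a) := hC.1
  have Cmono1 : ∀ b, Monotone fun a => C a b := hC.2.1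
  have counit : ∀ a x : UI, C (Impl a x) a ≤ x := fun a x => (hIC a x _).mp le_rfl
  have hwle : ∀ i j ξ, C (w i j) (a ξ j) ≤ a ξ i := fun i j ξ =>
    le_trans (Cmono1 _ (by rw [hw]; exact iInf_le _ ξ)) (counit _ _)
  have hwe : ∀ i, e ≤ w i i := fun i => by
    rw [hw]; exact le_iInf fun ξ => (hIC _ _ _).mpr (le_of_eq (he _))
  have hfix : ∀ ξ, W (a ξ) = a ξ := by
    intro ξ; funext i
    rw [hW]
    apply le_antisymm
    · exact iSup_le fun j => hwle i j ξ
    · calc a ξ i = C e (a ξ i) := (he _).symm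
        _ ≤ C (w i i) (a ξ i) := Cmono1 _ (hwe i)
        _ ≤ _ := le_iSup (fun j => C (w i j) _) i
  have hxle : ∀ x, x ≤ W x := by
    intro x i
    rw [hW]
    calc x i = C e (x i) := (he _).symm
      _ ≤ C (w i i) (x i) := Cmono1 _ (hwe i)
      _ ≤ _ := le_iSup (fun j => C (w i j) _) i
  have hmono : Monotone W := by
    intro x y hxy i
    rw [hW, hW]
    exact iSup_mono fun j => Cmono2 _ (hxy j)
  have htrans : ∀ i j l, C (w i j) (w j l) ≤ w i l := by
    intro i j l
    rw [hw i l]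
    refine le_iInf fun ξ => (hIC _ _ _).mpr ?_
    rw [hassoc]
    calc C (w i j) (C (w j l) (a ξ l)) ≤ C (w i j) (a ξ j) := Cmono2 _ (hwle j l ξ)
      _ ≤ a ξ i := hwle i j ξ
  have hidem : ∀ x, W (W x) = W x := by
    intro x
    apply le_antisymm _ (hxle (W x))
    intro i
    rw [hW]
    refine iSup_le fun j => ?_
    rw [hW x j]
    have : Nonempty (Fin n) := ⟨i⟩
    obtain ⟨l0, hl0⟩ := Finite.exists_max fun l => C (w j l) (x l)
    have hsup : (⨆ l, C (w j l) (x l)) = C (w j l0) (x l0) :=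
      le_antisymm (iSup_le hl0) (le_iSup (fun l => C (w j l) (x l)) l0)
    rw [hsup, ← hassoc, hW]
    exact le_trans (Cmono1 _ (htrans i j l0))
      (le_iSup (fun l => C (w i l) (x l)) l0)
  refine ⟨hfix, fun x => ?_⟩
  apply le_antisymm
  · exact le_sInf fun y hy => le_trans (hmono hy.2) (le_of_eq hy.1)
  · exact sInf_le ⟨hidem x, hxle x⟩
end
end

section
/- Let a fuzzy implication I and a fuzzy conjunction C form an adjunction, let a fuzzy disjunction D and a fuzzy co-implication J form an adjunction, and suppose C and D are dual with respect to a strong fuzzy negation η, i.e., D(x,y) = η(C(η(x),η(y))) for all x, y ∈ [0,1]. Then I and J are dual with respect to η: I(x,y) = η(J(η(x),η(y))) for all x, y ∈ [0,1]. -/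
open scoped Classical
noncomputable section

/-- If `(Impl, C)` and `(D, J)` are adjunctions and `C, D` are dual w.r.t. a
strong fuzzy negation `η`, then `Impl` and `J` are dual w.r.t. `η`. -/
theorem impl_coimpl_dual {Impl C D J : UI → UI → UI} {η : UI → UI}
    (hI : IsFuzzyImpl Impl) (hC : IsFuzzyConj C) (hD : IsFuzzyDisj D)
    (hJ : IsFuzzyCoimpl J) (hIC : AdjunctionIC Impl C) (hDJ : AdjunctionDJ D J)
    (hηa : Antitone η) (hη0 : η 0 = 1) (hη1 : η 1 = 0) (hηη : ∀ t, η (η t) = t)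
    (hdual : ∀ x y : UI, D x y = η (C (η x) (η y))) :
    ∀ x y : UI, Impl x y = η (J (η x) (η y)) := by
  have hle : ∀ s t : UI, η t ≤ η s ↔ s ≤ t := by
    intro s t
    constructor
    · intro h
      have := hηa h
      rwa [hηη, hηη] at this
    · exact fun h => hηa h
  intro x y
  have key : ∀ z : UI, z ≤ Impl x y ↔ z ≤ η (J (η x) (η y)) := by
    intro z
    rw [hIC x y z]
    have : z ≤ η (J (η x) (η y)) ↔ J (η x) (η y) ≤ η z := by
      rw [← hηη z, hle, hηη]
    rw [this, hDJ (η x) (η y) (η z), hdual, hηη, hle, hηη]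
  exact le_antisymm ((key _).mp le_rfl) ((key _).mpr le_rfl)
end
end

section
/- Let a^1, …, a^k ∈ [0,1]^n be fundamental memories and let S be the min-D PAFMM for the Gaines fuzzy disjunction D_G. Then for every x ∈ [0,1]^n and each component i: S(x)_i = min{ a^ξ_i : ξ ∈ {1,…,k}, a^ξ ≥ x componentwise }, where the minimum over the empty set is 1; that is, S(x) is the componentwise infimum of those fundamental memories that are componentwise greater than or equal to the input x, and S(x) is the all-ones vector if no fundamental memory satisfies a^ξ ≥ x. -/
open scoped Classical
noncomputable section

/-- The min-`D` PAFMM for Gaines' disjunction `D_G` satisfies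
`S(x)_i = min{ a^ξ_i : a^ξ ≥ x }`, the infimum over the empty set being `1`; i.e. `S(x)`
is the componentwise infimum of the fundamental memories above the input. -/
theorem gaines_minD_pafmm_eq_inf_of_ge {n k : ℕ} (a : Fin k → Fin n → UI)
    (x : Fin n → UI) (i : Fin n) :
    pafmmS DG a x i = ⨅ ξ ∈ {ξ : Fin k | x ≤ a ξ}, a ξ i := by
  classical
  have htop : (⊤ : UI) = 1 := rfl
  have hz : pafmmS DG a x = fun j => ⨅ ξ ∈ {ξ : Fin k | x ≤ a ξ}, a ξ j := by
    unfold pafmmS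
    apply le_antisymm
    · apply sInf_le
      constructor
      · refine ⟨fun ξ => if x ≤ a ξ then 0 else 1, fun j => ?_⟩
        refine iInf_congr fun ξ => ?_
        by_cases h : x ≤ a ξ
        · rw [iInf_pos (show ξ ∈ {ξ : Fin k | x ≤ a ξ} from h)]
          simp only [DG, if_pos h]
          rw [if_neg]
          intro h01
          exact zero_ne_one (Subtype.ext_iff.mp h01)
        · rw [iInf_neg (show ξ ∉ {ξ : Fin k | x ≤ a ξ} from h)]
          simp only [DG, if_neg h, if_pos rfl]
          exact htop
      · intro j
        refine le_iInf fun ξ => le_iInf fun hξ => hξ j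
    · apply le_sInf
      rintro y ⟨⟨θ, hθ⟩, hxy⟩ j
      rw [hθ j]
      refine le_iInf fun ξ => ?_
      unfold DG
      by_cases h1 : θ ξ = 1
      · rw [if_pos h1]; exact unitInterval.le_one'
      · rw [if_neg h1]
        have hmem : x ≤ a ξ := by
          intro j'
          refine le_trans (hxy j') ?_
          rw [hθ j']
          refine le_trans (iInf_le _ ξ) ?_
          unfold DG; rw [if_neg h1]
        exact iInf₂_le ξ hmem
  exact congrFun hz i
end
end
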